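/- Let M be a positive integer, h > 0, and let u, v, S be periodic grid functions satisfying the reduction relation v_i = δ_x² u_i − (h²/12)·δ_x² v_i + S_i for all i. Then (v, u) ≤ −|u|₁² − (h²/18)·‖v‖² + (h²/12)·(v, S) + (S, u). (Lemma 4, inequality (lem4-2).) -/

import Mathlib

open Finset

namespace BBMB

/-- A periodic grid function with period `M`. -/
def Periodic (M : ℕ) (u : ℤ → ℝ) : Prop := ∀ i : ℤ, u (i + (M : ℤ)) = u i

/-- Forward difference `δ_x u_{i+1/2} = (u_{i+1} - u_i)/h`. -/
noncomputable def dxp (h : ℝ) (u : ℤ → ℝ) (i : ℤ) : ℝ := (u (i + 1) - u i) / h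

/-- Backward difference `δ_x u_{i-1/2} = (u_i - u_{i-1})/h`. -/
noncomputable def dxm (h : ℝ) (u : ℤ → ℝ) (i : ℤ) : ℝ := (u i - u (i - 1)) / h

/-- Second difference `δ_x² u_i = (u_{i+1} - 2 u_i + u_{i-1})/h²`. -/
noncomputable def dxx (h : ℝ) (u : ℤ → ℝ) (i : ℤ) : ℝ :=
  (u (i + 1) - 2 * u i + u (i - 1)) / h ^ 2

/-- Centered difference `Δ_x u_i = (u_{i+1} - u_{i-1})/(2h)`. -/
noncomputable def Dx (h : ℝ) (u : ℤ → ℝ) (i : ℤ) : ℝ := (u (i + 1) - u (i - 1)) / (2 * h)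

/-- Discrete inner product `(u, w) = h ∑_{i=1}^{M} u_i w_i`. -/
noncomputable def ip (M : ℕ) (h : ℝ) (u w : ℤ → ℝ) : ℝ :=
  h * ∑ i ∈ Finset.Icc (1 : ℤ) (M : ℤ), u i * w i

/-- Discrete inner product `⟨δ_x u, δ_x w⟩ = h ∑_{i=1}^{M} (δ_x u_{i-1/2})(δ_x w_{i-1/2})`. -/
noncomputable def dip (M : ℕ) (h : ℝ) (u w : ℤ → ℝ) : ℝ :=
  h * ∑ i ∈ Finset.Icc (1 : ℤ) (M : ℤ), dxm h u i * dxm h w i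

/-- Discrete `L²` norm `‖u‖ = √((u,u))`. -/
noncomputable def nrm (M : ℕ) (h : ℝ) (u : ℤ → ℝ) : ℝ := Real.sqrt (ip M h u u)

/-- Discrete `H¹` seminorm `|u|₁ = √(⟨δ_x u, δ_x u⟩)`. -/
noncomputable def snorm (M : ℕ) (h : ℝ) (u : ℤ → ℝ) : ℝ := Real.sqrt (dip M h u u)

/-- Trilinear term `ψ(u,v)_i = (1/3) (u_i Δ_x v_i + Δ_x (u·v)_i)`. -/
noncomputable def psi (h : ℝ) (u v : ℤ → ℝ) (i : ℤ) : ℝ :=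
  (1 / 3) * (u i * Dx h v i + Dx h (fun j => u j * v j) i)

/-!
Testing the relation against `u` and against `v` and summing by parts gives
`(v,u) = -|u|₁² + (h²/12)⟨δ_x v, δ_x u⟩ + (S,u)` and `⟨δ_x v, δ_x u⟩ = -‖v‖² + (h²/12)|v|₁² + (v,S)`.
After substitution the only term of the wrong sign is `(h⁴/144)|v|₁²`, which the inverse inequality
`h²|v|₁² ≤ 4‖v‖²` bounds by `(h²/36)‖v‖²`; and `-1/12 + 1/36 = -1/18`.
-/

theorem Periodic.mul {M : ℕ} {f g : ℤ → ℝ} (hf : Periodic M f) (hg : Periodic M g) :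
    Periodic M (fun i => f i * g i) := fun i => congrArg₂ (· * ·) (hf i) (hg i)

theorem Periodic.comp_sub_one {M : ℕ} {f : ℤ → ℝ} (hf : Periodic M f) :
    Periodic M (fun i => f (i - 1)) := fun i => by
  simp only [← hf (i - 1), sub_add_eq_add_sub]

theorem Periodic.dxm {M : ℕ} {u : ℤ → ℝ} (hu : Periodic M u) (h : ℝ) :
    Periodic M (dxm h u) := fun i =>
  congrArg (· / h) (congrArg₂ (· - ·) (hu i) (hu.comp_sub_one i))

theorem sum_Icc_sub_eq_zero_of_periodic {M : ℕ} {f : ℤ → ℝ} (hf : Periodic M f) :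
    ∑ i ∈ Icc (1 : ℤ) M, (f (i + 1) - f i) = 0 := by
  rw [Int.Icc_eq_finset_map, sum_map, add_sub_cancel_right, Int.toNat_natCast]
  have := sum_range_sub (fun k : ℕ => f (1 + k)) M
  simp only [Function.Embedding.trans_apply, Nat.castEmbedding_apply, addLeftEmbedding_apply,
    Nat.cast_add, Nat.cast_one, ← add_assoc, Nat.cast_zero, add_zero] at this ⊢
  rw [this, hf, sub_self]

theorem sum_Icc_comp_sub_one_of_periodic {M : ℕ} {f : ℤ → ℝ} (hf : Periodic M f) :
    ∑ i ∈ Icc (1 : ℤ) M, f (i - 1) = ∑ i ∈ Icc (1 : ℤ) M, f i := by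
  have := sum_Icc_sub_eq_zero_of_periodic hf.comp_sub_one
  simp only [add_sub_cancel_right, sum_sub_distrib] at this
  linarith

theorem dxx_eq_dxm_sub_dxm (h : ℝ) (u : ℤ → ℝ) (i : ℤ) :
    dxx h u i = (dxm h u (i + 1) - dxm h u i) / h := by
  rw [dxx, dxm, dxm, add_sub_cancel_right, ← sub_div, div_div, sq]
  ring_nf

section InnerProduct

variable {M : ℕ} {h : ℝ}

theorem ip_comm (u w : ℤ → ℝ) : ip M h u w = ip M h w u := by
  simp only [ip, mul_comm (u _)]

theorem dip_comm (u w : ℤ → ℝ) : dip M h u w = dip M h w u := by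
  simp only [dip, mul_comm (dxm h u _)]

theorem ip_add_left (u v w : ℤ → ℝ) : ip M h (u + v) w = ip M h u w + ip M h v w := by
  simp only [ip, Pi.add_apply, add_mul, sum_add_distrib, mul_add]

theorem ip_sub_left (u v w : ℤ → ℝ) : ip M h (u - v) w = ip M h u w - ip M h v w := by
  simp only [ip, Pi.sub_apply, sub_mul, sum_sub_distrib, mul_sub]

theorem ip_smul_left (c : ℝ) (u w : ℤ → ℝ) : ip M h (c • u) w = c * ip M h u w := by
  simp only [ip, Pi.smul_apply, smul_eq_mul, mul_assoc, ← mul_sum]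
  ring

theorem nrm_sq (hh : 0 ≤ h) (u : ℤ → ℝ) : nrm M h u ^ 2 = ip M h u u :=
  Real.sq_sqrt <| mul_nonneg hh <| sum_nonneg fun _ _ => mul_self_nonneg _

theorem snorm_sq (hh : 0 ≤ h) (u : ℤ → ℝ) : snorm M h u ^ 2 = dip M h u u :=
  Real.sq_sqrt <| mul_nonneg hh <| sum_nonneg fun _ _ => mul_self_nonneg _

theorem ip_dxx_left {w z : ℤ → ℝ} (hw : Periodic M w) (hz : Periodic M z) :
    ip M h (dxx h w) z = -dip M h w z := by
  set g : ℤ → ℝ := fun i => dxm h w i * z (i - 1)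
  have hg : Periodic M g := (hw.dxm h).mul hz.comp_sub_one
  calc ip M h (dxx h w) z
      = h * ∑ i ∈ Icc (1 : ℤ) M, ((g (i + 1) - g i) / h - dxm h w i * dxm h z i) := by
        refine congrArg (h * ·) (sum_congr rfl fun i _ => ?_)
        have hdz : dxm h z i = (z i - z (i - 1)) / h := rfl
        simp only [g, dxx_eq_dxm_sub_dxm, add_sub_cancel_right, hdz]
        ring
    _ = h * ((∑ i ∈ Icc (1 : ℤ) M, (g (i + 1) - g i)) / h) - dip M h w z := by
        rw [sum_sub_distrib, ← sum_div, mul_sub, dip]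
    _ = -dip M h w z := by
        rw [sum_Icc_sub_eq_zero_of_periodic hg, zero_div, mul_zero, zero_sub]

theorem sq_mul_dxm_mul_self_le (h : ℝ) (v : ℤ → ℝ) (i : ℤ) :
    h ^ 2 * (dxm h v i * dxm h v i) ≤ 2 * (v i * v i + v (i - 1) * v (i - 1)) := by
  rcases eq_or_ne h 0 with rfl | hh
  · simp only [dxm, div_zero, mul_zero]
    nlinarith [mul_self_nonneg (v i), mul_self_nonneg (v (i - 1))]
  · have : h ^ 2 * (dxm h v i * dxm h v i) = (v i - v (i - 1)) ^ 2 := by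
      rw [dxm]
      field_simp
    rw [this]
    nlinarith [sq_nonneg (v i + v (i - 1))]

theorem sq_mul_dip_self_le (hh : 0 ≤ h) {v : ℤ → ℝ} (hv : Periodic M v) :
    h ^ 2 * dip M h v v ≤ 4 * ip M h v v := by
  calc h ^ 2 * dip M h v v
      = h * ∑ i ∈ Icc (1 : ℤ) M, h ^ 2 * (dxm h v i * dxm h v i) := by
        rw [dip, mul_left_comm, mul_sum]
    _ ≤ h * ∑ i ∈ Icc (1 : ℤ) M, 2 * (v i * v i + v (i - 1) * v (i - 1)) :=
        mul_le_mul_of_nonneg_left (sum_le_sum fun i _ => sq_mul_dxm_mul_self_le h v i) hh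
    _ = 4 * ip M h v v := by
        rw [← mul_sum, sum_add_distrib, sum_Icc_comp_sub_one_of_periodic (hv.mul hv), ip]
        ring

end InnerProduct

theorem ip_eq_of_reduction {M : ℕ} {h : ℝ} {u v S w : ℤ → ℝ}
    (hu : Periodic M u) (hv : Periodic M v) (hw : Periodic M w)
    (hrel : ∀ i : ℤ, v i = dxx h u i - h ^ 2 / 12 * dxx h v i + S i) :
    ip M h v w = -dip M h u w + h ^ 2 / 12 * dip M h v w + ip M h S w := by
  have hv' : v = dxx h u - (h ^ 2 / 12) • dxx h v + S := funext hrel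
  conv_lhs => rw [hv']
  rw [ip_add_left, ip_sub_left, ip_smul_left, ip_dxx_left hu hw, ip_dxx_left hv hw]
  ring

theorem reduction_inner_inequality_general (M : ℕ) (h : ℝ) (u v S : ℤ → ℝ)
    (hh : 0 < h)
    (hu : Periodic M u) (hv : Periodic M v)
    (hrel : ∀ i : ℤ, v i = dxx h u i - h ^ 2 / 12 * dxx h v i + S i) :
    ip M h v u ≤
      -(snorm M h u) ^ 2 - h ^ 2 / 18 * (nrm M h v) ^ 2
        + h ^ 2 / 12 * ip M h v S + ip M h S u := by
  have tested_u := ip_eq_of_reduction hu hv hu hrel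
  have tested_v := ip_eq_of_reduction hu hv hv hrel
  have inverse := mul_le_mul_of_nonneg_left (sq_mul_dip_self_le hh.le hv)
    (by positivity : 0 ≤ h ^ 2 / 144)
  rw [snorm_sq hh.le, nrm_sq hh.le, tested_u, dip_comm v u, ip_comm v S]
  linear_combination h ^ 2 / 12 * tested_v + inverse

/-- Lemma 4, inequality (lem4-2). -/
theorem reduction_inner_inequality (M : ℕ) (h : ℝ) (u v S : ℤ → ℝ)
    (hM : 0 < M) (hh : 0 < h)
    (hu : Periodic M u) (hv : Periodic M v) (hS : Periodic M S)
    (hrel : ∀ i : ℤ, v i = dxx h u i - h ^ 2 / 12 * dxx h v i + S i) :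
    ip M h v u ≤
      -(snorm M h u) ^ 2 - h ^ 2 / 18 * (nrm M h v) ^ 2
        + h ^ 2 / 12 * ip M h v S + ip M h S u :=
  reduction_inner_inequality_general M h u v S hh hu hv hrel

end BBMB
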